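/- Let q : K² × K² → K^m be a symmetric bilinear map (the second fundamental form of a surface at a point), viewed as an m-dimensional linear system of quadrics on P¹. If the linear system has projective dimension 1 (a pencil of binary quadratic forms with no common factor in general position), then there exists exactly one unordered pair of conjugate points on P¹, i.e. exactly one pair {[v],[w]} (possibly [v]=[w]) with q(v,w)=0. -/

import Mathlib

/-!
The conjugacy determinant `D(v)` vanishes exactly when `[v]` has a conjugate point, and when `D`
is not identically zero the forms are jointly nondegenerate, so that this partner is unique.
Over an algebraically closed field `D` splits into two linear factors, so its zeros are one or
two points of `P¹`, and every conjugate pair consists of zeros of `D`. Two distinct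
self-conjugate points `[v] ≠ [w]` are impossible: `v + w` would be conjugate to `v - w`, giving a
third zero `[v + w]`. Hence the partner map on the zeros of `D` has a single orbit.
-/

open Matrix

section Plane

variable {K : Type*} [Field K]

def wedge (x y : Fin 2 → K) : K := x 0 * y 1 - x 1 * y 0

lemma wedge_eq_zero_comm {x y : Fin 2 → K} : wedge x y = 0 ↔ wedge y x = 0 := by
  unfold wedge
  constructor <;> intro h <;> linear_combination -h

lemma wedge_eq_zero_of_dotProduct_eq_zero {a y z : Fin 2 → K} (ha : a ≠ 0)
    (hy : a ⬝ᵥ y = 0) (hz : a ⬝ᵥ z = 0) : wedge y z = 0 := by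
  obtain ⟨i, hi⟩ := Function.ne_iff.mp ha
  simp only [dotProduct, Fin.sum_univ_two] at hy hz
  refine (mul_eq_zero.mp ?_).resolve_right hi
  fin_cases i <;> simp only [wedge, Fin.zero_eta, Fin.mk_one]
  · linear_combination z 1 * hy - y 1 * hz
  · linear_combination y 0 * hz - z 0 * hy

lemma exists_smul_eq_of_wedge_eq_zero {x y : Fin 2 → K} (hx : x ≠ 0) (h : wedge x y = 0) :
    ∃ c : K, y = c • x := by
  obtain ⟨i, hi⟩ := Function.ne_iff.mp hx
  refine ⟨y i / x i, funext fun j => ?_⟩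
  rw [Pi.smul_apply, smul_eq_mul, div_mul_eq_mul_div, eq_div_iff hi]
  unfold wedge at h
  fin_cases i <;> fin_cases j <;> simp only [Fin.zero_eta, Fin.mk_one]
  all_goals first | rfl | linear_combination h | linear_combination -h

lemma exists_ne_zero_smul_eq_of_wedge_eq_zero {x y : Fin 2 → K} (hx : x ≠ 0) (hy : y ≠ 0)
    (h : wedge x y = 0) : ∃ c : K, c ≠ 0 ∧ y = c • x := by
  obtain ⟨c, rfl⟩ := exists_smul_eq_of_wedge_eq_zero hx h
  exact ⟨c, left_ne_zero_of_smul hy, rfl⟩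

lemma exists_dotProduct_mul_dotProduct_eq [IsAlgClosed K] (A B C : K) :
    ∃ a b : Fin 2 → K, ∀ x : Fin 2 → K,
      A * x 0 ^ 2 + B * x 0 * x 1 + C * x 1 ^ 2 = (a ⬝ᵥ x) * (b ⬝ᵥ x) := by
  by_cases hA : A = 0
  · refine ⟨![0, 1], ![B, C], fun x => ?_⟩
    subst hA
    simp only [dotProduct, Fin.sum_univ_two, cons_val_zero, cons_val_one, cons_val_fin_one]
    ring
  · obtain ⟨t, ht⟩ := IsAlgClosed.exists_root (Polynomial.C A * .X ^ 2 + .C B * .X + .C C)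
      (by rw [Polynomial.degree_quadratic hA]; decide)
    simp only [Polynomial.IsRoot, Polynomial.eval_add, Polynomial.eval_mul, Polynomial.eval_C,
      Polynomial.eval_pow, Polynomial.eval_X] at ht
    refine ⟨![A, -A * t], ![1, B / A + t], fun x => ?_⟩
    simp only [dotProduct, Fin.sum_univ_two, cons_val_zero, cons_val_one, cons_val_fin_one]
    field_simp
    linear_combination x 1 ^ 2 * ht

end Plane

lemma Matrix.IsSymm.vecMul_dotProduct_comm {R n : Type*} [CommSemiring R] [Fintype n]
    {Q : Matrix n n R} (hQ : Q.IsSymm) (v w : n → R) : (v ᵥ* Q) ⬝ᵥ w = (w ᵥ* Q) ⬝ᵥ v := by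
  rw [← dotProduct_mulVec, dotProduct_comm, ← vecMul_transpose, hQ.eq]

namespace QuadraticPencil

variable {K : Type*} [Field K] (Q₁ Q₂ : Matrix (Fin 2) (Fin 2) K)

def Conjugate (v w : Fin 2 → K) : Prop := (v ᵥ* Q₁) ⬝ᵥ w = 0 ∧ (v ᵥ* Q₂) ⬝ᵥ w = 0

def jacobian (v : Fin 2 → K) : K :=
  (v ᵥ* Q₁) 0 * (v ᵥ* Q₂) 1 - (v ᵥ* Q₁) 1 * (v ᵥ* Q₂) 0

variable {Q₁ Q₂}

lemma Conjugate.symm (h₁ : Q₁.IsSymm) (h₂ : Q₂.IsSymm) {v w : Fin 2 → K}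
    (h : Conjugate Q₁ Q₂ v w) : Conjugate Q₁ Q₂ w v := by
  rwa [Conjugate, h₁.vecMul_dotProduct_comm, h₂.vecMul_dotProduct_comm]

lemma Conjugate.smul_left {v w : Fin 2 → K} (h : Conjugate Q₁ Q₂ v w) (c : K) :
    Conjugate Q₁ Q₂ (c • v) w := by
  simp [Conjugate, smul_vecMul, smul_dotProduct, h.1, h.2]

lemma Conjugate.of_wedge_eq_zero_left {v v' w : Fin 2 → K} (h : Conjugate Q₁ Q₂ v w)
    (hv : v ≠ 0) (hvv' : wedge v v' = 0) : Conjugate Q₁ Q₂ v' w := by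
  obtain ⟨c, rfl⟩ := exists_smul_eq_of_wedge_eq_zero hv hvv'
  exact h.smul_left c

lemma conjugate_add_sub (h₁ : Q₁.IsSymm) (h₂ : Q₂.IsSymm) {v w : Fin 2 → K}
    (hv : Conjugate Q₁ Q₂ v v) (hw : Conjugate Q₁ Q₂ w w) :
    Conjugate Q₁ Q₂ (v + w) (v - w) := by
  simp only [Conjugate, add_vecMul, add_dotProduct, dotProduct_sub,
    h₁.vecMul_dotProduct_comm w v, h₂.vecMul_dotProduct_comm w v, hv.1, hv.2, hw.1, hw.2]
  constructor <;> ring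

lemma exists_conjugate_iff_jacobian_eq_zero (v : Fin 2 → K) :
    (∃ w ≠ 0, Conjugate Q₁ Q₂ v w) ↔ jacobian Q₁ Q₂ v = 0 := by
  have hconj : ∀ w, Conjugate Q₁ Q₂ v w ↔ Matrix.of ![v ᵥ* Q₁, v ᵥ* Q₂] *ᵥ w = 0 := fun w => by
    simp [Conjugate, funext_iff, Fin.forall_fin_two]
  simp only [hconj, exists_mulVec_eq_zero_iff, det_fin_two, jacobian]
  simp

lemma jacobian_eq_zero_of_conjugate {v w : Fin 2 → K} (hw : w ≠ 0) (h : Conjugate Q₁ Q₂ v w) :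
    jacobian Q₁ Q₂ v = 0 :=
  (exists_conjugate_iff_jacobian_eq_zero v).1 ⟨w, hw, h⟩

section Nondegenerate

variable (h₁ : Q₁.IsSymm) (h₂ : Q₂.IsSymm) (hD : ∃ u, jacobian Q₁ Q₂ u ≠ 0)
include h₁ h₂ hD

lemma vecMul_ne_zero_or {v : Fin 2 → K} (hv : v ≠ 0) : v ᵥ* Q₁ ≠ 0 ∨ v ᵥ* Q₂ ≠ 0 := by
  by_contra! h
  obtain ⟨u, hu⟩ := hD
  refine hu (jacobian_eq_zero_of_conjugate hv (Conjugate.symm h₁ h₂ ?_))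
  simp [Conjugate, h.1, h.2]

lemma wedge_eq_zero_of_conjugate {v y z : Fin 2 → K} (hv : v ≠ 0) (hy : Conjugate Q₁ Q₂ v y)
    (hz : Conjugate Q₁ Q₂ v z) : wedge y z = 0 := by
  rcases vecMul_ne_zero_or h₁ h₂ hD hv with h | h
  · exact wedge_eq_zero_of_dotProduct_eq_zero h hy.1 hz.1
  · exact wedge_eq_zero_of_dotProduct_eq_zero h hy.2 hz.2

lemma Conjugate.exists_smul_smul_of_wedge_eq_zero {v w v' w' : Fin 2 → K} (hv : v ≠ 0)
    (hw : w ≠ 0) (hv' : v' ≠ 0) (hw' : w' ≠ 0) (h : Conjugate Q₁ Q₂ v w)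
    (h' : Conjugate Q₁ Q₂ v' w') (hvv' : wedge v v' = 0) :
    ∃ a b : K, a ≠ 0 ∧ b ≠ 0 ∧ v' = a • v ∧ w' = b • w := by
  have hvw' : Conjugate Q₁ Q₂ v w' := h'.of_wedge_eq_zero_left hv' (wedge_eq_zero_comm.1 hvv')
  obtain ⟨a, ha, rfl⟩ := exists_ne_zero_smul_eq_of_wedge_eq_zero hv hv' hvv'
  obtain ⟨b, hb, rfl⟩ := exists_ne_zero_smul_eq_of_wedge_eq_zero hw hw'
    (wedge_eq_zero_of_conjugate h₁ h₂ hD hv h hvw')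
  exact ⟨a, b, ha, hb, rfl, rfl⟩

end Nondegenerate

section IsAlgClosed

variable [IsAlgClosed K]

lemma exists_jacobian_eq_mul (Q₁ Q₂ : Matrix (Fin 2) (Fin 2) K) :
    ∃ a b : Fin 2 → K, ∀ x, jacobian Q₁ Q₂ x = (a ⬝ᵥ x) * (b ⬝ᵥ x) := by
  obtain ⟨a, b, hab⟩ := exists_dotProduct_mul_dotProduct_eq (Q₁ 0 0 * Q₂ 0 1 - Q₁ 0 1 * Q₂ 0 0)
    (Q₁ 0 0 * Q₂ 1 1 + Q₁ 1 0 * Q₂ 0 1 - Q₁ 0 1 * Q₂ 1 0 - Q₁ 1 1 * Q₂ 0 0)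
    (Q₁ 1 0 * Q₂ 1 1 - Q₁ 1 1 * Q₂ 1 0)
  refine ⟨a, b, fun x => ?_⟩
  rw [← hab]
  simp only [jacobian, vecMul, dotProduct, Fin.sum_univ_two]
  ring

lemma exists_jacobian_eq_zero (Q₁ Q₂ : Matrix (Fin 2) (Fin 2) K) :
    ∃ v ≠ 0, jacobian Q₁ Q₂ v = 0 := by
  obtain ⟨a, b, hab⟩ := exists_jacobian_eq_mul Q₁ Q₂
  obtain ⟨v, hv, hav⟩ := exists_ne_zero_dotProduct_eq_zero a
  exact ⟨v, hv, by rw [hab, dotProduct_comm, hav, zero_mul]⟩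

variable (hD : ∃ u, jacobian Q₁ Q₂ u ≠ 0)
include hD

lemma wedge_eq_zero_of_jacobian_eq_zero {x y z : Fin 2 → K} (hx : jacobian Q₁ Q₂ x = 0)
    (hy : jacobian Q₁ Q₂ y = 0) (hz : jacobian Q₁ Q₂ z = 0) :
    wedge x y = 0 ∨ wedge y z = 0 ∨ wedge x z = 0 := by
  obtain ⟨a, b, hab⟩ := exists_jacobian_eq_mul Q₁ Q₂
  obtain ⟨u, hu⟩ := hD
  have ha : a ≠ 0 := by rintro rfl; simp [hab] at hu
  have hb : b ≠ 0 := by rintro rfl; simp [hab] at hu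
  rw [hab, mul_eq_zero] at hx hy hz
  rcases hx with hx | hx <;> rcases hy with hy | hy <;> rcases hz with hz | hz <;>
    simp [wedge_eq_zero_of_dotProduct_eq_zero ha, wedge_eq_zero_of_dotProduct_eq_zero hb, *]

variable (h₁ : Q₁.IsSymm) (h₂ : Q₂.IsSymm)
include h₁ h₂

lemma wedge_eq_zero_of_conjugate_self {v w : Fin 2 → K} (hv : Conjugate Q₁ Q₂ v v)
    (hw : Conjugate Q₁ Q₂ w w) : wedge v w = 0 := by
  by_contra hvw
  have hv0 : v ≠ 0 := by rintro rfl; simp [wedge] at hvw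
  have hw0 : w ≠ 0 := by rintro rfl; simp [wedge] at hvw
  have hsub : v - w ≠ 0 := by
    rw [sub_ne_zero]; rintro rfl; exact hvw (by unfold wedge; ring)
  have hadd := jacobian_eq_zero_of_conjugate hsub (conjugate_add_sub h₁ h₂ hv hw)
  have h := wedge_eq_zero_of_jacobian_eq_zero hD (jacobian_eq_zero_of_conjugate hv0 hv)
    (jacobian_eq_zero_of_conjugate hw0 hw) hadd
  have e₁ : wedge w (v + w) = -wedge v w := by simp only [wedge, Pi.add_apply]; ring
  have e₂ : wedge v (v + w) = wedge v w := by simp only [wedge, Pi.add_apply]; ring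
  rw [e₁, e₂, neg_eq_zero] at h
  tauto

lemma wedge_eq_zero_or_wedge_eq_zero_of_conjugate {v w x : Fin 2 → K} (hv : v ≠ 0) (hw : w ≠ 0)
    (hvw : Conjugate Q₁ Q₂ v w) (hx : jacobian Q₁ Q₂ x = 0) :
    wedge v x = 0 ∨ wedge w x = 0 := by
  by_contra! ⟨hvx, hwx⟩
  have hx0 : x ≠ 0 := by rintro rfl; simp [wedge] at hvx
  have hv_root := jacobian_eq_zero_of_conjugate hw hvw
  have hw_root := jacobian_eq_zero_of_conjugate hv (hvw.symm h₁ h₂)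
  have hvw' : wedge v w = 0 := by
    rcases wedge_eq_zero_of_jacobian_eq_zero hD hv_root hw_root hx with h | h | h
    exacts [h, absurd h hwx, absurd h hvx]
  obtain ⟨y, hy, hxy⟩ := (exists_conjugate_iff_jacobian_eq_zero x).2 hx
  rcases wedge_eq_zero_of_jacobian_eq_zero hD hv_root hx
    (jacobian_eq_zero_of_conjugate hx0 (hxy.symm h₁ h₂)) with h | h | h
  · exact hvx h
  · -- `[v]` and `[x]` would be two distinct self-conjugate points
    refine hvx (wedge_eq_zero_of_conjugate_self hD h₁ h₂ ?_ ?_)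
    · exact (hvw.symm h₁ h₂).of_wedge_eq_zero_left hw (wedge_eq_zero_comm.1 hvw')
    · exact (hxy.symm h₁ h₂).of_wedge_eq_zero_left hy (wedge_eq_zero_comm.1 h)
  · -- `[x]` would be a partner of `[v]` other than `[w]`
    have hvx' : Conjugate Q₁ Q₂ v x :=
      (hxy.symm h₁ h₂).of_wedge_eq_zero_left hy (wedge_eq_zero_comm.1 h)
    exact hwx (wedge_eq_zero_of_conjugate h₁ h₂ hD hv hvw hvx')

end IsAlgClosed

end QuadraticPencil

open QuadraticPencil in
theorem stmt8_general {K : Type*} [Field K] [IsAlgClosed K]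
    (Q₁ Q₂ : Matrix (Fin 2) (Fin 2) K) (h₁ : Q₁.IsSymm) (h₂ : Q₂.IsSymm)
    (hD : ∃ v : Fin 2 → K,
      (v ᵥ* Q₁) 0 * (v ᵥ* Q₂) 1 - (v ᵥ* Q₁) 1 * (v ᵥ* Q₂) 0 ≠ 0) :
    ∃ v w : Fin 2 → K, v ≠ 0 ∧ w ≠ 0 ∧
      (v ᵥ* Q₁) ⬝ᵥ w = 0 ∧ (v ᵥ* Q₂) ⬝ᵥ w = 0 ∧
      ∀ v' w' : Fin 2 → K, v' ≠ 0 → w' ≠ 0 →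
        (v' ᵥ* Q₁) ⬝ᵥ w' = 0 → (v' ᵥ* Q₂) ⬝ᵥ w' = 0 →
        ((∃ a b : K, a ≠ 0 ∧ b ≠ 0 ∧ v' = a • v ∧ w' = b • w) ∨
         (∃ a b : K, a ≠ 0 ∧ b ≠ 0 ∧ v' = a • w ∧ w' = b • v)) := by
  obtain ⟨P, hP, hProot⟩ := exists_jacobian_eq_zero Q₁ Q₂
  obtain ⟨w, hw, hPw⟩ := (exists_conjugate_iff_jacobian_eq_zero P).2 hProot
  refine ⟨P, w, hP, hw, hPw.1, hPw.2, fun v' w' hv' hw' e₁ e₂ => ?_⟩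
  have hvw' : Conjugate Q₁ Q₂ v' w' := ⟨e₁, e₂⟩
  rcases wedge_eq_zero_or_wedge_eq_zero_of_conjugate hD h₁ h₂ hP hw hPw
    (jacobian_eq_zero_of_conjugate hw' hvw') with h | h
  · exact .inl (hPw.exists_smul_smul_of_wedge_eq_zero h₁ h₂ hD hP hw hv' hw' hvw' h)
  · exact .inr ((hPw.symm h₁ h₂).exists_smul_smul_of_wedge_eq_zero h₁ h₂ hD hw hP hv' hw' hvw' h)

/-- A pencil of binary quadratic forms (two linearly independent symmetric
bilinear forms `q₁, q₂` on `K²`, encoded by symmetric matrices `Q₁, Q₂`) in general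
position (the conjugacy determinant `D(v) = q₁(v,e₁)q₂(v,e₂) − q₁(v,e₂)q₂(v,e₁)` does
not vanish identically) admits exactly one unordered pair of conjugate points on `P¹`:
there exist nonzero `v, w` with `q₁(v,w) = q₂(v,w) = 0` (possibly `[v] = [w]`, the
asymptotic case), and any other conjugate pair agrees with `{[v],[w]}`. -/
theorem stmt8 {K : Type*} [Field K] [IsAlgClosed K] [CharZero K]
    (Q₁ Q₂ : Matrix (Fin 2) (Fin 2) K) (h₁ : Q₁.IsSymm) (h₂ : Q₂.IsSymm)
    (hind : LinearIndependent K ![Q₁, Q₂])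
    (hD : ∃ v : Fin 2 → K,
      (v ᵥ* Q₁) 0 * (v ᵥ* Q₂) 1 - (v ᵥ* Q₁) 1 * (v ᵥ* Q₂) 0 ≠ 0) :
    ∃ v w : Fin 2 → K, v ≠ 0 ∧ w ≠ 0 ∧
      (v ᵥ* Q₁) ⬝ᵥ w = 0 ∧ (v ᵥ* Q₂) ⬝ᵥ w = 0 ∧
      ∀ v' w' : Fin 2 → K, v' ≠ 0 → w' ≠ 0 →
        (v' ᵥ* Q₁) ⬝ᵥ w' = 0 → (v' ᵥ* Q₂) ⬝ᵥ w' = 0 →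
        ((∃ a b : K, a ≠ 0 ∧ b ≠ 0 ∧ v' = a • v ∧ w' = b • w) ∨
         (∃ a b : K, a ≠ 0 ∧ b ≠ 0 ∧ v' = a • w ∧ w' = b • v)) :=
  stmt8_general Q₁ Q₂ h₁ h₂ hD
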